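/- arXiv:1106.0111 — 2 statements merged into one kernel-verified Lean document; each statement's English description precedes it below -/
import Mathlib

section
/- For every α ∈ (0,1) there exists an infinite-dimensional linear subspace A^α of the space of bounded continuous functions ℝ → ℝ such that every f ∈ A^α is α-Hölder on ℝ (i.e. sup{|f(x)−f(y)|/|x−y|^α : x,y ∈ ℝ, 0 < |x−y| ≤ 1} < ∞) and every nonzero f ∈ A^α has infinite topological entropy, h_top(f) = ∞. -/
/-!
On the disjoint blocks `[4⁻ᵏ, 2·4⁻ᵏ]`, which accumulate only at `0`, place sine waves with `d`
full periods of half-width `w` and amplitude `w ^ α`. Each wave is `α`-Hölder with constant `π`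
whatever `w` is, and since their supports are disjoint, every bounded combination of them is
Hölder as well. The blocks are shared out among basis functions `g n`, each receiving blocks of
every tooth count `d` and of arbitrarily small size. If `f = ∑ c n • g n` with `c n ≠ 0`, then on a
small enough block of `g n` with `d` teeth the amplitude `|c n| * w ^ α` exceeds the size of the
block, because `α < 1`; so `f` maps each of the `d` half-periods from a crest to a trough over the
whole block. This is a horseshoe with `d` separated branches, whence `htop f ≥ log d`.
-/

open BoundedContinuousFunction

/-- The topological entropy of `f : ℝ → ℝ`, defined as the (Bowen/cover) topological
entropy of `f` on the closure of its image. -/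
noncomputable def htop (f : ℝ → ℝ) : EReal :=
  Dynamics.coverEntropy f (closure (Set.range f))

/-- `f` has a `d`-horseshoe: there are `d` nondegenerate compact intervals with pairwise
disjoint interiors, each of whose images under `f` contains all of them. -/
def HasHorseshoe (f : ℝ → ℝ) (d : ℕ) : Prop :=
  ∃ I : Fin d → ℝ × ℝ,
    (∀ i, (I i).1 < (I i).2) ∧
    (∀ i j, i ≠ j →
      Disjoint (interior (Set.Icc (I i).1 (I i).2)) (interior (Set.Icc (I j).1 (I j).2))) ∧
    (∀ i j, Set.Icc (I j).1 (I j).2 ⊆ f '' Set.Icc (I i).1 (I i).2)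

open Set Function Real Filter Topology

namespace Dynamics

section Itinerary

variable {X ι : Type*} {T : X → X} {J : ι → Set X}

lemma exists_iterate_mem_of_subset_image (hne : ∀ i, (J i).Nonempty)
    (hJ : ∀ i j, J j ⊆ T '' J i) (ω : ℕ → ι) (n : ℕ) :
    ∃ x, ∀ k ≤ n, T^[k] x ∈ J (ω k) := by
  induction n generalizing ω with
  | zero => exact (hne (ω 0)).imp fun x hx k hk => by rwa [Nat.le_zero.1 hk]
  | succ n ih =>
    obtain ⟨y, hy⟩ := ih (ω ∘ Nat.succ)
    obtain ⟨x, hx, rfl⟩ := hJ (ω 0) (ω 1) (hy 0 n.zero_le)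
    refine ⟨x, fun k hk => ?_⟩
    cases k with
    | zero => exact hx
    | succ k => exact hy k (Nat.succ_le_succ_iff.1 hk)

end Itinerary

variable {X ι : Type*} [PseudoMetricSpace X] [Fintype ι] [Nonempty ι]
  {T : X → X} {F : Set X} {J : ι → Set X} {ε : ℝ}

lemma pow_card_le_netMaxcard (hε : 0 < ε) (hJF : ∀ i, J i ⊆ F) (hne : ∀ i, (J i).Nonempty)
    (hJ : ∀ i j, J j ⊆ T '' J i)
    (hsep : ∀ i j, i ≠ j → ∀ x ∈ J i, ∀ y ∈ J j, ε ≤ dist x y) (n : ℕ) :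
    (Fintype.card ι ^ n : ℕ∞) ≤ netMaxcard T F {p | dist p.1 p.2 < ε / 2} n := by
  classical
  have hx : ∀ ω : Fin n → ι, ∃ x ∈ F, ∀ k : Fin n, T^[k] x ∈ J (ω k) := by
    intro ω
    obtain ⟨x, hx⟩ := exists_iterate_mem_of_subset_image hne hJ
      (fun k => if h : k < n then ω ⟨k, h⟩ else Classical.arbitrary ι) n
    exact ⟨x, hJF _ (hx 0 n.zero_le), fun k => by simpa using hx k k.2.le⟩
  choose x hxF hxJ using hx
  have hfar : ∀ ω ω', ω ≠ ω' → ∃ k : Fin n, ε ≤ dist (T^[k] (x ω)) (T^[k] (x ω')) := by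
    intro ω ω' hωω'
    obtain ⟨k, hk⟩ := Function.ne_iff.1 hωω'
    exact ⟨k, hsep _ _ hk _ (hxJ ω k) _ (hxJ ω' k)⟩
  have hinj : Injective x := by
    intro ω ω' h
    by_contra hωω'
    obtain ⟨k, hk⟩ := hfar ω ω' hωω'
    rw [h, dist_self] at hk
    exact hε.not_ge hk
  have hnet : IsDynNetIn T F {p | dist p.1 p.2 < ε / 2} n (Finset.univ.image x : Set X) := by
    refine ⟨by simpa [Set.range_subset_iff] using hxF, ?_⟩
    simp only [Finset.coe_image, Finset.coe_univ, Set.image_univ]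
    rintro _ ⟨ω, rfl⟩ _ ⟨ω', rfl⟩ hne'
    obtain ⟨k, hk⟩ := hfar ω ω' fun h => hne' (h ▸ rfl)
    refine Set.disjoint_left.2 fun z hz hz' => hk.not_gt ?_
    rw [mem_ball_dynEntourage] at hz hz'
    have h1 : dist (T^[k] (x ω)) (T^[k] z) < ε / 2 := hz k k.2
    have h2 : dist (T^[k] (x ω')) (T^[k] z) < ε / 2 := hz' k k.2
    linarith [dist_triangle_right (T^[k] (x ω)) (T^[k] (x ω')) (T^[k] z)]
  calc (Fintype.card ι ^ n : ℕ∞) = (Finset.univ.image x).card := by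
        rw [Finset.card_image_of_injective _ hinj]; simp
    _ ≤ _ := hnet.card_le_netMaxcard

lemma log_card_le_coverEntropy (hε : 0 < ε) (hJF : ∀ i, J i ⊆ F) (hne : ∀ i, (J i).Nonempty)
    (hJ : ∀ i j, J j ⊆ T '' J i)
    (hsep : ∀ i j, i ≠ j → ∀ x ∈ J i, ∀ y ∈ J j, ε ≤ dist x y) :
    ENNReal.log (Fintype.card ι) ≤ coverEntropy T F := by
  have hU : {p : X × X | dist p.1 p.2 < ε / 2} ∈ uniformity X :=
    Metric.dist_mem_uniformity (half_pos hε)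
  calc ENNReal.log (Fintype.card ι)
      = ExpGrowth.expGrowthSup fun n => (Fintype.card ι : ENNReal) ^ n :=
        ExpGrowth.expGrowthSup_pow.symm
    _ ≤ netEntropyEntourage T F {p | dist p.1 p.2 < ε / 2} :=
        ExpGrowth.expGrowthSup_monotone fun n => by
          simpa using ENat.toENNReal_le.2 (pow_card_le_netMaxcard hε hJF hne hJ hsep n)
    _ ≤ coverEntropy T F := netEntropyEntourage_le_coverEntropy T F hU

end Dynamics

lemma EReal.eq_top_of_forall_log_natCast_le {x : EReal} (h : ∀ n : ℕ, ENNReal.log n ≤ x) :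
    x = ⊤ := by
  rw [← EReal.log_exp x, ENNReal.log_eq_top_iff]
  refine ENNReal.eq_top_of_forall_nnreal_le fun r => ?_
  obtain ⟨n, hn⟩ := exists_nat_ge r
  calc (r : ENNReal) ≤ n := by exact_mod_cast hn
    _ ≤ EReal.exp x := by rw [← ENNReal.log_le_log_iff, EReal.log_exp]; exact h n

section SineBump

/-- Clamping the argument to `[a, a + 2 * d * w]` extends the `d` full periods of
`x ↦ h * sin (π (x - a) / w)` continuously by `0`. -/
noncomputable def sineBump (a w h : ℝ) (d : ℕ) (x : ℝ) : ℝ :=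
  h * sin (π / w * (max a (min (a + 2 * d * w) x) - a))

variable {a w h : ℝ} {d : ℕ} {x y : ℝ}

@[fun_prop]
lemma continuous_sineBump : Continuous (sineBump a w h d) := by
  unfold sineBump; fun_prop

lemma mul_sineBump (c : ℝ) : c * sineBump a w h d x = sineBump a w (c * h) d x :=
  (mul_assoc c h _).symm

lemma abs_sineBump_le : |sineBump a w h d x| ≤ |h| := by
  rw [sineBump, abs_mul]
  exact mul_le_of_le_one_right (abs_nonneg h) (abs_sin_le_one _)

lemma sineBump_of_le (hx : x ≤ a) : sineBump a w h d x = 0 := by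
  rw [sineBump, max_eq_left ((min_le_right _ _).trans hx)]
  simp

lemma sineBump_of_ge (hw : 0 < w) (hx : a + 2 * d * w ≤ x) : sineBump a w h d x = 0 := by
  have hab : a ≤ a + 2 * d * w := le_add_of_nonneg_right (by positivity)
  rw [sineBump, min_eq_left hx, max_eq_right hab,
    show π / w * (a + 2 * d * w - a) = (2 * d : ℕ) * π by push_cast; field_simp; ring,
    sin_nat_mul_pi, mul_zero]

lemma support_sineBump_subset (hw : 0 < w) :
    support (sineBump a w h d) ⊆ Icc a (a + 2 * d * w) := by
  intro x hx
  by_contra hx'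
  rcases not_and_or.1 hx' with h | h
  · exact hx (sineBump_of_le (not_le.1 h).le)
  · exact hx (sineBump_of_ge hw (not_le.1 h).le)

lemma abs_sineBump_sub_le (hw : 0 < w) :
    |sineBump a w h d x - sineBump a w h d y| ≤ |h| * (π / w) * |x - y| := by
  have hclamp : |max a (min (a + 2 * d * w) x) - max a (min (a + 2 * d * w) y)| ≤ |x - y| :=
    Set.abs_projIcc_sub_projIcc (le_add_of_nonneg_right (by positivity))
  rw [sineBump, sineBump, ← mul_sub, abs_mul, mul_assoc |h|]
  refine mul_le_mul_of_nonneg_left ?_ (abs_nonneg h)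
  refine (abs_sin_sub_sin_le _ _).trans ?_
  rw [← mul_sub, sub_sub_sub_cancel_right, abs_mul, abs_of_pos (by positivity : 0 < π / w)]
  gcongr

lemma abs_sineBump_sub_le_rpow {α : ℝ} (hw : 0 < w) (hα0 : 0 ≤ α) (hα1 : α ≤ 1) :
    |sineBump a w (w ^ α) d x - sineBump a w (w ^ α) d y| ≤ π * |x - y| ^ α := by
  have hwα : 0 < w ^ α := rpow_pos_of_pos hw α
  set t := |x - y|
  have ht : 0 ≤ t := abs_nonneg _
  rcases le_total t w with htw | hwt
  · have key : t / w ≤ t ^ α / w ^ α := by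
      rw [← div_rpow ht hw.le]
      exact self_le_rpow_of_le_one (by positivity) ((div_le_one hw).2 htw) hα1
    calc _ ≤ |w ^ α| * (π / w) * t := abs_sineBump_sub_le hw
      _ = π * w ^ α * (t / w) := by rw [abs_of_pos hwα]; ring
      _ ≤ π * w ^ α * (t ^ α / w ^ α) := by gcongr
      _ = π * t ^ α := by field_simp
  · have hb : ∀ z, |sineBump a w (w ^ α) d z| ≤ |w ^ α| := fun z => abs_sineBump_le
    calc _ ≤ |sineBump a w (w ^ α) d x| + |sineBump a w (w ^ α) d y| := abs_sub _ _
      _ ≤ w ^ α + w ^ α := by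
          rw [abs_of_pos hwα] at hb; exact add_le_add (hb x) (hb y)
      _ ≤ 2 * t ^ α := by linarith [rpow_le_rpow hw.le hwt hα0]
      _ ≤ π * t ^ α := by gcongr; exact two_le_pi

def sineTooth (a w : ℝ) (j : ℕ) : Set ℝ := Icc (a + (2 * j + 1 / 2) * w) (a + (2 * j + 3 / 2) * w)

lemma sineTooth_subset (hw : 0 ≤ w) {j : ℕ} (hj : j < d) :
    sineTooth a w j ⊆ Icc a (a + 2 * d * w) := by
  have hjd : (j : ℝ) + 1 ≤ d := by exact_mod_cast hj
  refine Icc_subset_Icc ?_ ?_ <;> nlinarith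

lemma le_dist_of_mem_sineTooth (hw : 0 ≤ w) {i j : ℕ} (hij : i ≠ j)
    (hx : x ∈ sineTooth a w i) (hy : y ∈ sineTooth a w j) : w ≤ dist x y := by
  rw [Real.dist_eq]
  rcases hij.lt_or_gt with h | h
  · have : (i : ℝ) + 1 ≤ j := by exact_mod_cast h
    rw [abs_sub_comm]
    exact le_abs.2 (Or.inl (by nlinarith [hx.2, hy.1]))
  · have : (j : ℝ) + 1 ≤ i := by exact_mod_cast h
    exact le_abs.2 (Or.inl (by nlinarith [hx.1, hy.2]))

lemma sineBump_sineTooth_left (hw : 0 < w) {j : ℕ} (hj : j < d) :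
    sineBump a w h d (a + (2 * j + 1 / 2) * w) = h := by
  obtain ⟨hl, hr⟩ := sineTooth_subset (a := a) hw.le hj (left_mem_Icc.2 (by nlinarith))
  rw [sineBump, min_eq_right hr, max_eq_right hl,
    show π / w * (a + (2 * j + 1 / 2) * w - a) = π / 2 + (j : ℤ) * (2 * π) by
      push_cast; field_simp; ring,
    sin_add_int_mul_two_pi, sin_pi_div_two, mul_one]

lemma sineBump_sineTooth_right (hw : 0 < w) {j : ℕ} (hj : j < d) :
    sineBump a w h d (a + (2 * j + 3 / 2) * w) = -h := by
  obtain ⟨hl, hr⟩ := sineTooth_subset (a := a) hw.le hj (right_mem_Icc.2 (by nlinarith))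
  rw [sineBump, min_eq_right hr, max_eq_right hl,
    show π / w * (a + (2 * j + 3 / 2) * w - a) = π / 2 + π + (j : ℤ) * (2 * π) by
      push_cast; field_simp; ring,
    sin_add_int_mul_two_pi, sin_add_pi, sin_pi_div_two, mul_neg_one]

lemma Icc_abs_subset_image_sineTooth (hw : 0 < w) {j : ℕ} (hj : j < d) :
    Icc (-|h|) |h| ⊆ sineBump a w h d '' sineTooth a w j := by
  have hlr : a + (2 * j + 1 / 2) * w ≤ a + (2 * j + 3 / 2) * w := by nlinarith
  have hh : uIcc h (-h) = Icc (-|h|) |h| := by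
    rcases le_total 0 h with h0 | h0
    · rw [uIcc_of_ge (by linarith), abs_of_nonneg h0]
    · rw [uIcc_of_le (by linarith), abs_of_nonpos h0, neg_neg]
  have := intermediate_value_uIcc (a := a + (2 * j + 1 / 2) * w) (b := a + (2 * j + 3 / 2) * w)
    (continuous_sineBump (a := a) (w := w) (h := h) (d := d)).continuousOn
  rwa [sineBump_sineTooth_left hw hj, sineBump_sineTooth_right hw hj, hh, uIcc_of_le hlr] at this

end SineBump

open Dynamics in
lemma log_le_coverEntropy_of_eqOn_sineBump {f : ℝ → ℝ} {a w h : ℝ} {d : ℕ} (ha : 0 ≤ a)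
    (hw : 0 < w) (hd : 0 < d) (hh : a + 2 * d * w ≤ |h|)
    (hf : EqOn f (sineBump a w h d) (Icc a (a + 2 * d * w))) :
    ENNReal.log d ≤ coverEntropy f (closure (range f)) := by
  have : NeZero d := ⟨hd.ne'⟩
  have hJ : ∀ i j : Fin d, sineTooth a w j ⊆ f '' sineTooth a w i := fun i j =>
    calc sineTooth a w j ⊆ Icc a (a + 2 * d * w) := sineTooth_subset hw.le j.2
      _ ⊆ Icc (-|h|) |h| := Icc_subset_Icc (by linarith [abs_nonneg h]) hh
      _ ⊆ sineBump a w h d '' sineTooth a w i := Icc_abs_subset_image_sineTooth hw i.2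
      _ = f '' sineTooth a w i := ((hf.mono (sineTooth_subset hw.le i.2)).image_eq).symm
  simpa using log_card_le_coverEntropy hw
    (fun i => (hJ 0 i).trans ((image_subset_range _ _).trans subset_closure))
    (fun i => nonempty_Icc.2 (by nlinarith)) hJ
    fun i j hij x hx y hy => le_dist_of_mem_sineTooth hw.le (Fin.val_injective.ne hij) hx hy

section DisjointSupport

variable {ι X : Type*} [Nonempty ι] {φ : ι → X → ℝ}

lemma exists_forall_ne_eq_zero_of_pairwise_disjoint_support
    (hφ : Pairwise (Disjoint on fun i => support (φ i))) (x : X) :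
    ∃ i, ∀ j ≠ i, φ j x = 0 := by
  by_cases h : ∃ i, φ i x ≠ 0
  · obtain ⟨i, hi⟩ := h
    exact ⟨i, fun j hji => by_contra fun hj => (hφ hji).ne_of_mem hj hi rfl⟩
  · push Not at h
    exact ⟨Classical.arbitrary ι, fun j _ => h j⟩

lemma abs_tsum_sub_tsum_le_of_pairwise_disjoint_support
    (hφ : Pairwise (Disjoint on fun i => support (φ i))) {x y : X} {B : ℝ}
    (hB : ∀ i, |φ i x - φ i y| ≤ B) :
    |∑' i, φ i x - ∑' i, φ i y| ≤ 2 * B := by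
  obtain ⟨i, hi⟩ := exists_forall_ne_eq_zero_of_pairwise_disjoint_support hφ x
  obtain ⟨j, hj⟩ := exists_forall_ne_eq_zero_of_pairwise_disjoint_support hφ y
  rw [tsum_eq_single i hi, tsum_eq_single j hj]
  rcases eq_or_ne i j with rfl | hij
  · linarith [hB i, abs_nonneg (φ i x - φ i y)]
  · calc |φ i x - φ j y| = |(φ i x - φ i y) + (φ j x - φ j y)| := by
          rw [hi j hij.symm, hj i hij]; ring_nf
      _ ≤ 2 * B := by linarith [abs_add_le (φ i x - φ i y) (φ j x - φ j y), hB i, hB j]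

end DisjointSupport

lemma memHolder_of_dist_le {X Y : Type*} [PseudoMetricSpace X] [PseudoMetricSpace Y]
    {f : X → Y} {r : NNReal} {C : ℝ} (h : ∀ x y, dist (f x) (f y) ≤ C * dist x y ^ (r : ℝ)) :
    MemHolder r f := by
  refine ⟨C.toNNReal, fun x y => ?_⟩
  calc edist (f x) (f y) = ENNReal.ofReal (dist (f x) (f y)) := edist_dist _ _
    _ ≤ ENNReal.ofReal (C * dist x y ^ (r : ℝ)) := ENNReal.ofReal_le_ofReal (h x y)
    _ = C.toNNReal * edist x y ^ (r : ℝ) := by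
      rw [ENNReal.ofReal_mul' (by positivity), edist_dist,
        ENNReal.ofReal_rpow_of_nonneg dist_nonneg r.coe_nonneg]
      rfl

lemma memHolder_of_mem_span {X Y : Type*} [MetricSpace X] [NormedAddCommGroup Y]
    [NormedSpace ℝ Y] {r : NNReal} {S : Set (X →ᵇ Y)} (hS : ∀ g ∈ S, MemHolder r g) {f : X →ᵇ Y}
    (hf : f ∈ Submodule.span ℝ S) : MemHolder r f := by
  induction hf using Submodule.span_induction with
  | mem g hg => exact hS g hg
  | zero => exact memHolder_zero
  | add f g _ _ hf hg => exact hf.add hg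
  | smul c f _ hf => exact hf.smul

namespace HolderBlocks

noncomputable section

def blockLeft (k : ℕ) : ℝ := 4⁻¹ ^ k

def block (k : ℕ) : Set ℝ := Icc (blockLeft k) (2 * blockLeft k)

/-- Block `k` encodes the triple `(blockLabel k, blockTeeth k - 1, j)` through `Nat.unpair`, so
every label owns blocks of every tooth count with arbitrarily large index. -/
def blockLabel (k : ℕ) : ℕ := k.unpair.1

def blockTeeth (k : ℕ) : ℕ := k.unpair.2.unpair.1 + 1

def blockWidth (k : ℕ) : ℝ := blockLeft k / (2 * blockTeeth k)

def blockBump (α : ℝ) (k : ℕ) : ℝ → ℝ :=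
  sineBump (blockLeft k) (blockWidth k) (blockWidth k ^ α) (blockTeeth k)

def blockSum (α : ℝ) (γ : ℕ → ℝ) (x : ℝ) : ℝ := ∑' k, γ k * blockBump α k x

lemma blockLeft_pos (k : ℕ) : 0 < blockLeft k := by unfold blockLeft; positivity

lemma blockTeeth_pos (k : ℕ) : 0 < blockTeeth k := Nat.succ_pos _

lemma blockWidth_pos (k : ℕ) : 0 < blockWidth k := by
  have := blockLeft_pos k; have := blockTeeth_pos k; unfold blockWidth; positivity

lemma blockWidth_le_one (k : ℕ) : blockWidth k ≤ 1 := by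
  have h1 : blockLeft k ≤ 1 := pow_le_one₀ (by norm_num) (by norm_num)
  have h2 : (1 : ℝ) ≤ 2 * blockTeeth k := by
    have : (1 : ℝ) ≤ blockTeeth k := by exact_mod_cast blockTeeth_pos k
    linarith
  exact div_le_one_of_le₀ (h1.trans h2) (by positivity)

lemma blockLeft_add_two_mul_blockTeeth_mul_blockWidth (k : ℕ) :
    blockLeft k + 2 * blockTeeth k * blockWidth k = 2 * blockLeft k := by
  have := blockTeeth_pos k
  rw [blockWidth]; field_simp; ring

lemma pairwise_disjoint_block : Pairwise (Disjoint on block) := by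
  have key : ∀ {j k : ℕ}, j < k → 2 * blockLeft k < blockLeft j := fun {j k} h => by
    have h1 : blockLeft k ≤ blockLeft (j + 1) := pow_le_pow_of_le_one (by norm_num) (by norm_num) h
    have h2 : blockLeft (j + 1) = blockLeft j / 4 := by rw [blockLeft, blockLeft, pow_succ]; ring
    linarith [blockLeft_pos j]
  intro j k hjk
  rcases hjk.lt_or_gt with h | h
  · exact Set.disjoint_left.2 fun x hj hk => (key h).not_ge (hj.1.trans hk.2)
  · exact Set.disjoint_left.2 fun x hj hk => (key h).not_ge (hk.1.trans hj.2)

lemma support_blockBump_subset (α : ℝ) (k : ℕ) : support (blockBump α k) ⊆ block k := by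
  rw [block, ← blockLeft_add_two_mul_blockTeeth_mul_blockWidth]
  exact support_sineBump_subset (blockWidth_pos k)

lemma pairwise_disjoint_support_blockBump (α : ℝ) (γ : ℕ → ℝ) :
    Pairwise (Disjoint on fun k => support fun x => γ k * blockBump α k x) :=
  fun j k hjk => (pairwise_disjoint_block hjk).mono
    ((support_mul_subset_right _ _).trans (support_blockBump_subset α j))
    ((support_mul_subset_right _ _).trans (support_blockBump_subset α k))

lemma exists_forall_blockSum_eq (α x : ℝ) :
    ∃ k, ∀ γ, blockSum α γ x = γ k * blockBump α k x := by
  obtain ⟨k, hk⟩ := exists_forall_ne_eq_zero_of_pairwise_disjoint_support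
    (pairwise_disjoint_support_blockBump α 1) x
  refine ⟨k, fun γ => tsum_eq_single k fun j hj => ?_⟩
  rw [show blockBump α j x = 0 by simpa using hk j hj, mul_zero]

lemma blockSum_eq_of_mem_block {α x : ℝ} {k : ℕ} (hx : x ∈ block k) (γ : ℕ → ℝ) :
    blockSum α γ x = γ k * blockBump α k x :=
  tsum_eq_single k fun j hj => by
    rw [show blockBump α j x = 0 from notMem_support.1 fun hj' =>
      (pairwise_disjoint_block hj).notMem_of_mem_left (support_blockBump_subset α j hj') hx,
      mul_zero]

lemma abs_blockSum_le {α : ℝ} (hα : 0 ≤ α) {γ : ℕ → ℝ} {M : ℝ} (hγ : ∀ k, |γ k| ≤ M) (x : ℝ) :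
    |blockSum α γ x| ≤ M := by
  obtain ⟨k, hk⟩ := exists_forall_blockSum_eq α x
  have hb : |blockBump α k x| ≤ 1 := by
    refine abs_sineBump_le.trans ?_
    rw [abs_of_pos (rpow_pos_of_pos (blockWidth_pos k) α)]
    exact rpow_le_one (blockWidth_pos k).le (blockWidth_le_one k) hα
  rw [hk, abs_mul]
  exact (mul_le_of_le_one_right (abs_nonneg _) hb).trans (hγ k)

lemma abs_blockSum_sub_le {α : ℝ} (hα0 : 0 ≤ α) (hα1 : α ≤ 1) {γ : ℕ → ℝ} {M : ℝ}
    (hγ : ∀ k, |γ k| ≤ M) (x y : ℝ) :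
    |blockSum α γ x - blockSum α γ y| ≤ 2 * M * π * |x - y| ^ α := by
  have := abs_tsum_sub_tsum_le_of_pairwise_disjoint_support
    (pairwise_disjoint_support_blockBump α γ) (x := x) (y := y) (B := M * (π * |x - y| ^ α))
    fun k => by
      rw [← mul_sub, abs_mul]
      exact mul_le_mul (hγ k) (abs_sineBump_sub_le_rpow (blockWidth_pos k) hα0 hα1)
        (abs_nonneg _) ((abs_nonneg _).trans (hγ k))
  simpa only [blockSum, mul_assoc] using this

lemma memHolder_blockSum {α : ℝ} (hα0 : 0 ≤ α) (hα1 : α ≤ 1) {γ : ℕ → ℝ} {M : ℝ}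
    (hγ : ∀ k, |γ k| ≤ M) : MemHolder α.toNNReal (blockSum α γ) :=
  memHolder_of_dist_le fun x y => by
    simpa only [Real.dist_eq, Real.coe_toNNReal _ hα0] using abs_blockSum_sub_le hα0 hα1 hγ x y

def blockIndicator (n k : ℕ) : ℝ := if blockLabel k = n then 1 else 0

lemma abs_blockIndicator_le_one (n k : ℕ) : |blockIndicator n k| ≤ 1 := by
  unfold blockIndicator; split_ifs <;> simp

lemma continuous_blockSum {α : ℝ} (hα : α ∈ Ioc 0 1) {γ : ℕ → ℝ} {M : ℝ}
    (hγ : ∀ k, |γ k| ≤ M) : Continuous (blockSum α γ) :=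
  (memHolder_blockSum hα.1.le hα.2 hγ).holderWith.continuous (Real.toNNReal_pos.2 hα.1)

def blockBasis {α : ℝ} (hα : α ∈ Ioc 0 1) (n : ℕ) : ℝ →ᵇ ℝ :=
  .ofNormedAddCommGroup (blockSum α (blockIndicator n))
    (continuous_blockSum hα (abs_blockIndicator_le_one n)) 1
    (abs_blockSum_le hα.1.le (abs_blockIndicator_le_one n))

lemma coe_linearCombination_blockBasis {α : ℝ} (hα : α ∈ Ioc 0 1) (l : ℕ →₀ ℝ) :
    ⇑(Finsupp.linearCombination ℝ (blockBasis hα) l) = blockSum α (fun k => l (blockLabel k)) := by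
  funext x
  obtain ⟨k, hk⟩ := exists_forall_blockSum_eq α x
  rw [Finsupp.linearCombination_apply, Finsupp.sum, coe_sum, Finset.sum_apply, hk]
  simp only [blockBasis, coe_smul, coe_ofNormedAddCommGroup, hk, smul_eq_mul, ← mul_assoc,
    ← Finset.sum_mul, blockIndicator, mul_ite, mul_one, mul_zero, Finset.sum_ite_eq,
    Finsupp.if_mem_support]

lemma exists_mem_block_blockBump_ne_zero (α : ℝ) (k : ℕ) :
    ∃ x ∈ block k, blockBump α k x ≠ 0 := by
  have hw := blockWidth_pos k
  refine ⟨blockLeft k + (2 * (0 : ℕ) + 1 / 2) * blockWidth k, ?_, ?_⟩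
  · rw [block, ← blockLeft_add_two_mul_blockTeeth_mul_blockWidth]
    exact sineTooth_subset hw.le (blockTeeth_pos k) (left_mem_Icc.2 (by nlinarith))
  · rw [blockBump, sineBump_sineTooth_left hw (blockTeeth_pos k)]
    exact (rpow_pos_of_pos hw α).ne'

lemma eq_zero_of_blockSum_eq_zero {α : ℝ} {γ : ℕ → ℝ} (h : blockSum α γ = 0) : γ = 0 := by
  funext k
  obtain ⟨x, hx, hx0⟩ := exists_mem_block_blockBump_ne_zero α k
  have := congr_fun h x
  rw [blockSum_eq_of_mem_block hx, Pi.zero_apply] at this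
  exact (mul_eq_zero.1 this).resolve_right hx0

lemma linearIndependent_blockBasis {α : ℝ} (hα : α ∈ Ioc 0 1) :
    LinearIndependent ℝ (blockBasis hα) := by
  refine linearIndependent_iff.2 fun l hl => Finsupp.ext fun n => ?_
  have := congr_fun (eq_zero_of_blockSum_eq_zero (α := α) (γ := fun k => l (blockLabel k))
    (by rw [← coe_linearCombination_blockBasis hα, hl, coe_zero])) (Nat.pair n 0)
  simpa [blockLabel] using this

lemma exists_block_two_mul_blockLeft_le {α : ℝ} (hα : α < 1) {c : ℝ} (hc : c ≠ 0) (n e : ℕ) :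
    ∃ k, blockLabel k = n ∧ blockTeeth k = e + 1 ∧ 2 * blockLeft k ≤ |c| * blockWidth k ^ α := by
  set D : ℝ := 2 * ((e + 1 : ℕ) : ℝ)
  have hD : 0 < D := by positivity
  have hL : Tendsto (fun j => blockLeft (Nat.pair n (Nat.pair e j))) atTop (𝓝 0) :=
    (tendsto_pow_atTop_nhds_zero_of_lt_one (by norm_num) (by norm_num)).comp <|
      tendsto_atTop_mono (fun j => (Nat.right_le_pair e j).trans (Nat.right_le_pair n _))
        tendsto_id
  have hsmall : Tendsto (fun j => 2 * D ^ α * blockLeft (Nat.pair n (Nat.pair e j)) ^ (1 - α))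
      atTop (𝓝 0) := by
    simpa [zero_rpow (sub_ne_zero.2 hα.ne')] using
      (hL.rpow_const (Or.inr (sub_nonneg.2 hα.le))).const_mul (2 * D ^ α)
  obtain ⟨j, hj⟩ := (hsmall.eventually (gt_mem_nhds (abs_pos.2 hc))).exists
  set k := Nat.pair n (Nat.pair e j)
  have hteeth : blockTeeth k = e + 1 := by simp [k, blockTeeth]
  refine ⟨k, by simp [k, blockLabel], hteeth, ?_⟩
  have hL0 := blockLeft_pos k
  have hsplit : blockLeft k ^ (1 - α) * blockLeft k ^ α = blockLeft k := by
    rw [← rpow_add hL0, sub_add_cancel, rpow_one]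
  calc 2 * blockLeft k = 2 * (blockLeft k ^ (1 - α) * blockLeft k ^ α) := by rw [hsplit]
    _ = 2 * D ^ α * blockLeft k ^ (1 - α) * (blockLeft k ^ α / D ^ α) := by field_simp
    _ ≤ |c| * (blockLeft k ^ α / D ^ α) := by gcongr
    _ = |c| * blockWidth k ^ α := by rw [blockWidth, hteeth, div_rpow hL0.le hD.le]

lemma htop_blockSum_eq_top {α : ℝ} (hα : α < 1) {γ : ℕ → ℝ} {n : ℕ} {c : ℝ} (hc : c ≠ 0)
    (hγ : ∀ k, blockLabel k = n → γ k = c) : htop (blockSum α γ) = ⊤ := by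
  refine EReal.eq_top_of_forall_log_natCast_le fun e => ?_
  obtain ⟨k, hkn, hke, hk⟩ := exists_block_two_mul_blockLeft_le hα hc n e
  have hf : EqOn (blockSum α γ)
      (sineBump (blockLeft k) (blockWidth k) (c * blockWidth k ^ α) (blockTeeth k))
      (Icc (blockLeft k) (blockLeft k + 2 * blockTeeth k * blockWidth k)) := fun x hx => by
    rw [blockLeft_add_two_mul_blockTeeth_mul_blockWidth] at hx
    rw [blockSum_eq_of_mem_block hx, hγ k hkn, blockBump, mul_sineBump]
  have hcover : blockLeft k + 2 * blockTeeth k * blockWidth k ≤ |c * blockWidth k ^ α| := by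
    rwa [blockLeft_add_two_mul_blockTeeth_mul_blockWidth, abs_mul,
      abs_of_pos (rpow_pos_of_pos (blockWidth_pos k) α)]
  calc ENNReal.log e ≤ ENNReal.log (blockTeeth k) := by
        rw [hke]; exact ENNReal.log_le_log (by exact_mod_cast e.le_succ)
    _ ≤ htop (blockSum α γ) := log_le_coverEntropy_of_eqOn_sineBump (blockLeft_pos k).le
        (blockWidth_pos k) (blockTeeth_pos k) hcover hf

end

end HolderBlocks

theorem exists_holder_subspace_infinite_entropy (α : ℝ) (hα : α ∈ Set.Ioo (0 : ℝ) 1) :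
    ∃ A : Submodule ℝ (ℝ →ᵇ ℝ),
      ¬ Module.Finite ℝ A ∧
      (∀ f ∈ A, ∃ C : ℝ, ∀ x y : ℝ, 0 < |x - y| → |x - y| ≤ 1 →
        |f x - f y| ≤ C * |x - y| ^ α) ∧
      (∀ f ∈ A, f ≠ 0 → htop f = ⊤) := by
  open HolderBlocks in
  have hα' : α ∈ Ioc 0 1 := Ioo_subset_Ioc_self hα
  refine ⟨Submodule.span ℝ (range (blockBasis hα')), fun hfin => ?_, fun f hf => ?_,
    fun f hf hf0 => ?_⟩
  · exact Module.Finite.not_linearIndependent_of_infinite _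
      (linearIndependent_span (linearIndependent_blockBasis hα'))
  · obtain ⟨C, hC⟩ := memHolder_of_mem_span (by
      rintro _ ⟨n, rfl⟩
      exact memHolder_blockSum hα.1.le hα.2.le (abs_blockIndicator_le_one n)) hf
    refine ⟨C, fun x y _ _ => ?_⟩
    simpa [Real.dist_eq, Real.coe_toNNReal _ hα.1.le] using hC.dist_le x y
  · obtain ⟨l, rfl⟩ := Finsupp.mem_span_range_iff_exists_finsupp.1 hf
    obtain ⟨n, hn⟩ : ∃ n, l n ≠ 0 := by
      by_contra! h
      exact hf0 (by rw [show l = 0 from Finsupp.ext h, Finsupp.sum_zero_index])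
    rw [← Finsupp.linearCombination_apply, coe_linearCombination_blockBasis]
    exact htop_blockSum_eq_top hα.2 hn fun k hk => congrArg l hk
end

section
/- For every integer d ≥ 1 and every real λ with |λ| ≥ 2πd, the function x ↦ λ·sin(x) has a d-horseshoe. Consequently, for the one-dimensional subspace B = {λ·sin : λ ∈ ℝ} of bounded continuous functions ℝ → ℝ, one has h_top^+(B) = ∞. -/
open BoundedContinuousFunction

/-! On `[π/2 + 2πk, 3π/2 + 2πk]` the map `x ↦ λ sin x` runs from `λ` to `-λ`, so for
`|λ| ≥ 2πd` the image of each of the first `d` such arches contains `[0, 2πd]`, hence all of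
them. Whenever sets `K₁, …, K_d` satisfy `K_j ⊆ f(K_i)`, every finite itinerary is followed by
some orbit (backward induction); if the `K_i` are uniformly separated, the `d^n` itineraries of
length `n` give an `(n, ε)`-separated set, so the entropy is at least `log d`. The arches are `π`
apart, and `log d → ∞`. -/

open Set Function Dynamics
open scoped SetRel ENNReal Uniformity

section Itineraries

variable {X ι : Type*} {f : X → X} {K : ι → Set X}

theorem exists_iterate_mem_of_subset_image (hne : ∀ i, (K i).Nonempty)
    (hcov : ∀ i j, K j ⊆ f '' K i) (n : ℕ) (w : Fin (n + 1) → ι) :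
    ∃ x, ∀ k, f^[k] x ∈ K (w k) := by
  induction n with
  | zero => exact (hne (w 0)).imp fun x hx => Fin.forall_fin_one.2 hx
  | succ n ih =>
    obtain ⟨y, hy⟩ := ih (Fin.tail w)
    obtain ⟨x, hx, rfl⟩ := hcov (w 0) (w 1) (hy 0)
    exact ⟨x, Fin.cases hx fun k => by rw [Fin.val_succ, iterate_succ_apply]; exact hy k⟩

variable [Fintype ι] {F : Set X} {U : SetRel X X}

theorem card_pow_le_netMaxcard [U.IsRefl] [U.IsSymm] (hKF : ∀ i, K i ⊆ F)
    (hne : ∀ i, (K i).Nonempty) (hcov : ∀ i j, K j ⊆ f '' K i)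
    (hsep : ∀ i j, i ≠ j → ∀ x ∈ K i, ∀ y ∈ K j, (x, y) ∉ U ○ U) (n : ℕ) :
    ((Fintype.card ι ^ (n + 1) : ℕ) : ℕ∞) ≤ netMaxcard f F U (n + 1) := by
  classical
  choose x hx using exists_iterate_mem_of_subset_image hne hcov n
  have hinj : Injective x := fun w w' hxw => by_contra fun hww' => by
    obtain ⟨k, hk⟩ := Function.ne_iff.1 hww'
    exact hsep _ _ hk _ (hx w k) _ (hxw ▸ hx w' k) (U ○ U).rfl
  have hnet : IsDynNetIn f F U (n + 1) (Finset.univ.image x) := by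
    refine ⟨?_, ?_⟩
    · simp only [Finset.coe_image, Finset.coe_univ, image_univ, range_subset_iff]
      exact fun w => hKF _ (hx w 0)
    · simp only [Finset.coe_image, Finset.coe_univ, image_univ]
      rintro _ ⟨w, rfl⟩ _ ⟨w', rfl⟩ hww'
      obtain ⟨k, hk⟩ := Function.ne_iff.1 (ne_of_apply_ne x hww')
      refine Set.disjoint_left.2 fun y hy hy' => ?_
      have hUU := mem_ball_dynEntourage_comp f (n + 1) _ _ ⟨y, hy, hy'⟩
      exact hsep _ _ hk.symm _ (hx w' k) _ (hx w k) (mem_ball_dynEntourage.1 hUU k k.isLt)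
  simpa [Finset.card_image_of_injective _ hinj] using hnet.card_le_netMaxcard

theorem log_card_le_coverEntropy [UniformSpace X] (hKF : ∀ i, K i ⊆ F)
    (hne : ∀ i, (K i).Nonempty) (hcov : ∀ i j, K j ⊆ f '' K i) (hU : U ∈ 𝓤 X)
    (hsep : ∀ i j, i ≠ j → ∀ x ∈ K i, ∀ y ∈ K j, (x, y) ∉ U) :
    ENNReal.log (Fintype.card ι) ≤ coverEntropy f F := by
  obtain ⟨V, hV, _, hVU⟩ := comp_symm_mem_uniformity_sets hU
  have := isRefl_of_mem_uniformity hV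
  have hpow :
      ∀ᶠ n in Filter.atTop, (Fintype.card ι : ℝ≥0∞) ^ n ≤ netMaxcard f F V n := by
    refine Filter.eventually_atTop.2 ⟨1, fun n hn => ?_⟩
    obtain ⟨m, rfl⟩ := Nat.exists_eq_add_of_le' hn
    have := card_pow_le_netMaxcard (U := V) hKF hne hcov
      (fun i j hij x hx y hy hxy => hsep i j hij x hx y hy (hVU hxy)) m
    exact_mod_cast ENat.toENNReal_le.2 this
  calc ENNReal.log (Fintype.card ι)
      = ExpGrowth.expGrowthSup fun n => (Fintype.card ι : ℝ≥0∞) ^ n :=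
        ExpGrowth.expGrowthSup_pow.symm
    _ ≤ netEntropyEntourage f F V := ExpGrowth.expGrowthSup_eventually_monotone hpow
    _ ≤ coverEntropy f F := netEntropyEntourage_le_coverEntropy f F hV

end Itineraries

section Sine

open Real

noncomputable def sinPeak (k : ℕ) : ℝ := π / 2 + k * (2 * π)

theorem sin_sinPeak (k : ℕ) : sin (sinPeak k) = 1 := by
  rw [sinPeak, sin_add_nat_mul_two_pi, sin_pi_div_two]

theorem sin_sinPeak_add_pi (k : ℕ) : sin (sinPeak k + π) = -1 := by
  rw [sin_add_pi, sin_sinPeak]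

theorem Icc_sinPeak_subset_Icc {d k : ℕ} (hk : k < d) :
    Icc (sinPeak k) (sinPeak k + π) ⊆ Icc 0 (2 * π * d) := by
  have hkd : (k : ℝ) + 1 ≤ d := by exact_mod_cast hk
  refine Icc_subset_Icc (by unfold sinPeak; positivity) ?_
  unfold sinPeak
  nlinarith [pi_pos]

theorem Icc_neg_abs_subset_image_mul_sin (lam : ℝ) (k : ℕ) :
    Icc (-|lam|) |lam| ⊆ (fun x => lam * sin x) '' Icc (sinPeak k) (sinPeak k + π) := by
  have hle : sinPeak k ≤ sinPeak k + π := le_add_of_nonneg_right pi_pos.le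
  have hc : ContinuousOn (fun x => lam * sin x) (Icc (sinPeak k) (sinPeak k + π)) := by
    fun_prop
  rcases le_total 0 lam with h | h
  · simpa [abs_of_nonneg h, sin_sinPeak, sin_sinPeak_add_pi] using
      intermediate_value_Icc' hle hc
  · simpa [abs_of_nonpos h, sin_sinPeak, sin_sinPeak_add_pi] using
      intermediate_value_Icc hle hc

theorem pi_le_dist_of_mem_Icc_sinPeak {i j : ℕ} (hij : i ≠ j) {x y : ℝ}
    (hx : x ∈ Icc (sinPeak i) (sinPeak i + π)) (hy : y ∈ Icc (sinPeak j) (sinPeak j + π)) :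
    π ≤ dist x y := by
  wlog h : i < j generalizing i j x y
  · rw [dist_comm]
    exact this hij.symm hy hx (hij.symm.lt_of_le (not_lt.1 h))
  have hsucc : (i : ℝ) + 1 ≤ j := by exact_mod_cast h
  rw [dist_comm, dist_eq]
  refine le_trans ?_ (le_abs_self _)
  unfold sinPeak at hx hy
  nlinarith [hx.2, hy.1, pi_pos]

theorem Icc_sinPeak_subset_image_mul_sin {d : ℕ} {lam : ℝ} (hlam : 2 * π * d ≤ |lam|)
    {j : ℕ} (hj : j < d) (i : ℕ) :
    Icc (sinPeak j) (sinPeak j + π) ⊆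
      (fun x => lam * sin x) '' Icc (sinPeak i) (sinPeak i + π) :=
  (Icc_sinPeak_subset_Icc hj).trans <|
    (Icc_subset_Icc (neg_nonpos.2 (abs_nonneg lam)) hlam).trans
      (Icc_neg_abs_subset_image_mul_sin lam i)

theorem hasHorseshoe_mul_sin {d : ℕ} {lam : ℝ} (hlam : 2 * π * d ≤ |lam|) :
    HasHorseshoe (fun x => lam * sin x) d := by
  refine ⟨fun k => (sinPeak k, sinPeak k + π), fun _ => lt_add_of_pos_right _ pi_pos,
    fun i j hij => Disjoint.mono interior_subset interior_subset ?_,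
    fun i j => Icc_sinPeak_subset_image_mul_sin hlam j.isLt i⟩
  exact Set.disjoint_left.2 fun x hxi hxj => pi_pos.not_ge <| by
    simpa using pi_le_dist_of_mem_Icc_sinPeak (Fin.val_injective.ne hij) hxi hxj

theorem log_le_htop_mul_sin (d : ℕ) : ENNReal.log d ≤ htop (fun x => 2 * π * d * sin x) := by
  have hlam : 2 * π * d ≤ |2 * π * d| := le_abs_self _
  have hcov := fun i j : Fin d => Icc_sinPeak_subset_image_mul_sin hlam j.isLt i
  simpa [htop] using
    log_card_le_coverEntropy (K := fun k : Fin d => Icc (sinPeak k) (sinPeak k + π))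
      (fun k => (hcov k k).trans ((image_subset_range _ _).trans subset_closure))
      (fun _ => nonempty_Icc.2 (le_add_of_nonneg_right pi_pos.le)) hcov
      (Metric.dist_mem_uniformity pi_pos) fun i j hij x hx y hy => not_lt.2 <|
        pi_le_dist_of_mem_Icc_sinPeak (Fin.val_injective.ne hij) hx hy

end Sine

theorem iSup_log_natCast : ⨆ n : ℕ, ENNReal.log n = ⊤ := by
  simpa [ENNReal.iSup_natCast] using
    (ENNReal.logOrderIso.map_iSup fun n : ℕ => (n : ℝ≥0∞)).symm

theorem sin_horseshoe_and_entropy_sup :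
    (∀ d : ℕ, 1 ≤ d → ∀ lam : ℝ, 2 * Real.pi * d ≤ |lam| →
      HasHorseshoe (fun x : ℝ => lam * Real.sin x) d) ∧
    (⨆ lam : ℝ, htop (fun x : ℝ => lam * Real.sin x)) = ⊤ := by
  refine ⟨fun d _ lam hlam => hasHorseshoe_mul_sin hlam, eq_top_iff.2 ?_⟩
  calc ⊤ = ⨆ d : ℕ, ENNReal.log d := iSup_log_natCast.symm
    _ ≤ ⨆ d : ℕ, htop (fun x => 2 * Real.pi * d * Real.sin x) := iSup_mono log_le_htop_mul_sin
    _ ≤ ⨆ lam : ℝ, htop (fun x => lam * Real.sin x) :=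
      iSup_le fun d => le_iSup (fun lam : ℝ => htop (fun x => lam * Real.sin x)) _
end
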